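/- (At most 2n−1 admissible zeros) Let a ∈ ℝ_{>0}^{3+3n}. Then the set of admissible zeros { ξ > 0 : ξ ≠ ξ*, P(ξ) = 0 and F1(ξ)·Δ(ξ) > 0 } has at most 2n−1 elements. -/

import Mathlib

/-! P is a real polynomial of degree 2n+1 with positive leading coefficient and P(0) > 0, so
it has a negative root. At ξ* one has P(ξ*) = −C(ξ*)F1(ξ*)² ≤ 0, whereas P = AΔ² > 0 at the
positive zeros of F1 other than ξ*. The intermediate value theorem applied to max(±F1, P),
between ξ* and 0 or between ξ* and a large M according to the sign of F1(ξ*), then gives a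
positive root ρ of P with F1(ρ)Δ(ρ) ≤ 0, which is not admissible. So at most 2n+1 − 2 roots
of P are admissible zeros. -/

open Finset

namespace Phos

noncomputable section

/-- Standard basis vector of `ℝ^N`, with `1`-based index `j`. -/
def e (N : ℕ) (j : ℕ) : Fin N → ℝ := fun m => if (m : ℕ) + 1 = j then 1 else 0

/-- Standard basis vector of `ℕ^N`, with `1`-based index `j`. -/
def eN (N : ℕ) (j : ℕ) : Fin N → ℕ := fun m => if (m : ℕ) + 1 = j then 1 else 0

/-- The stoichiometric matrix `S` of the `n`-site sequential distributive
phosphorylation network.  For each `i = 1,…,n` the six columns `6(i−1)+1,…,6(i−1)+6`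
are `e_{1+3i}−e_1−e_{3i−1}`, `e_1+e_{3i−1}−e_{1+3i}`, `e_1+e_{2+3i}−e_{1+3i}`,
`e_{3+3i}−e_3−e_{2+3i}`, `e_3+e_{2+3i}−e_{3+3i}`, `e_3+e_{3i−1}−e_{3+3i}`. -/
def Smat (n : ℕ) : Matrix (Fin (3*n+3)) (Fin (6*n)) ℝ :=
  Matrix.of fun m r =>
    (![e (3*n+3) (1+3*((r : ℕ)/6+1)) - e (3*n+3) 1 - e (3*n+3) (3*((r : ℕ)/6+1)-1),
       e (3*n+3) 1 + e (3*n+3) (3*((r : ℕ)/6+1)-1) - e (3*n+3) (1+3*((r : ℕ)/6+1)),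
       e (3*n+3) 1 + e (3*n+3) (2+3*((r : ℕ)/6+1)) - e (3*n+3) (1+3*((r : ℕ)/6+1)),
       e (3*n+3) (3+3*((r : ℕ)/6+1)) - e (3*n+3) 3 - e (3*n+3) (2+3*((r : ℕ)/6+1)),
       e (3*n+3) 3 + e (3*n+3) (2+3*((r : ℕ)/6+1)) - e (3*n+3) (3+3*((r : ℕ)/6+1)),
       e (3*n+3) 3 + e (3*n+3) (3*((r : ℕ)/6+1)-1) - e (3*n+3) (3+3*((r : ℕ)/6+1))])
      ⟨(r : ℕ) % 6, Nat.mod_lt _ (by norm_num)⟩ m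

/-- The rate exponent matrix `Y`: for each `i = 1,…,n` the six columns
`6(i−1)+1,…,6(i−1)+6` are `e_1+e_{3i−1}`, `e_{1+3i}`, `e_{1+3i}`,
`e_3+e_{2+3i}`, `e_{3+3i}`, `e_{3+3i}`. -/
def Ymat (n : ℕ) : Matrix (Fin (3*n+3)) (Fin (6*n)) ℕ :=
  Matrix.of fun m r =>
    (![eN (3*n+3) 1 + eN (3*n+3) (3*((r : ℕ)/6+1)-1),
       eN (3*n+3) (1+3*((r : ℕ)/6+1)),
       eN (3*n+3) (1+3*((r : ℕ)/6+1)),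
       eN (3*n+3) 3 + eN (3*n+3) (2+3*((r : ℕ)/6+1)),
       eN (3*n+3) (3+3*((r : ℕ)/6+1)),
       eN (3*n+3) (3+3*((r : ℕ)/6+1))])
      ⟨(r : ℕ) % 6, Nat.mod_lt _ (by norm_num)⟩ m

/-- The monomial map `Φ(x)_j = ∏ₘ xₘ^{Y_{mj}}`. -/
def Phi (n : ℕ) (x : Fin (3*n+3) → ℝ) : Fin (6*n) → ℝ :=
  fun r => ∏ m, x m ^ (Ymat n m r)

/-- The conservation matrix `Z` (rows `z1, z2, z3`). -/
def Zmat (n : ℕ) : Matrix (Fin 3) (Fin (3*n+3)) ℝ :=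
  Matrix.of fun r j =>
    if (r : ℕ) = 0 then (if (j : ℕ) % 3 = 0 then 1 else 0)
    else if (r : ℕ) = 1 then
      (if (j : ℕ) % 3 = 1 then 1 else if (j : ℕ) = 0 ∨ (j : ℕ) = 2 then -1 else 0)
    else (if (j : ℕ) % 3 = 2 then 1 else 0)

/-- The `6 × 3` block `E0`. -/
def E0 : Fin 6 → Fin 3 → ℝ :=
  ![![1,0,1], ![1,0,0], ![0,0,1], ![0,1,1], ![0,1,0], ![0,0,1]]

/-- The block diagonal matrix `E` with `n` copies of `E0`. -/
def Emat (n : ℕ) : Matrix (Fin (6*n)) (Fin (3*n)) ℝ :=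
  Matrix.of fun r c =>
    if (r : ℕ) / 6 = (c : ℕ) / 3 then
      E0 ⟨(r : ℕ) % 6, Nat.mod_lt _ (by norm_num)⟩ ⟨(c : ℕ) % 3, Nat.mod_lt _ (by norm_num)⟩
    else 0

/-- The matrix `L ∈ ℤ^{(3+3n)×3}`: row `1 = (1, n−1, −1)`, row `2 = (−1, −n, 0)`,
row `3 = (1, n−2, −1)`, and for `i = 1,…,n` rows `1+3i` and `3+3i` equal
`(0, i−2, −1)` while row `2+3i = (−1, i−n, 0)`. -/
def Lmat (n : ℕ) : Matrix (Fin (3*n+3)) (Fin 3) ℤ :=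
  Matrix.of fun j c =>
    if (j : ℕ) = 0 then ![1, (n : ℤ) - 1, -1] c
    else if (j : ℕ) = 1 then ![-1, -(n : ℤ), 0] c
    else if (j : ℕ) = 2 then ![1, (n : ℤ) - 2, -1] c
    else if (j : ℕ) % 3 = 1 then ![-1, (((j : ℕ) / 3 : ℕ) : ℤ) - (n : ℤ), 0] c
    else ![0, (((j : ℕ) / 3 : ℕ) : ℤ) - 2, -1] c

/-- `g^L ∈ ℝ_{>0}^{3+3n}`, `(g^L)_j = g₁^{L_{j1}} g₂^{L_{j2}} g₃^{L_{j3}}`. -/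
def gL (n : ℕ) (g : Fin 3 → ℝ) : Fin (3*n+3) → ℝ :=
  fun j => ∏ c, g c ^ (Lmat n j c)

/-- The coset condition map `Θ(g,a) = Z diag(a) (g^L − 𝟙)`. -/
def Theta (n : ℕ) (g : Fin 3 → ℝ) (a : Fin (3*n+3) → ℝ) : Fin 3 → ℝ :=
  (Zmat n).mulVec (fun j => a j * (gL n g j - 1))

/-- The rate constants `κ(a,λ)_j = (Eλ)_j / Φ(a)_j`. -/
def kappaOf (n : ℕ) (a : Fin (3*n+3) → ℝ) (lam : Fin (3*n) → ℝ) : Fin (6*n) → ℝ :=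
  fun r => (Emat n).mulVec lam r / Phi n a r

/-- `x` is a (positive) steady state of `ẋ = S diag(κ) Φ(x)`. -/
def isSteady (n : ℕ) (κ : Fin (6*n) → ℝ) (x : Fin (3*n+3) → ℝ) : Prop :=
  (Smat n).mulVec (fun r => κ r * Phi n x r) = 0

/-- The `1`-based component `a_j` of a vector `a ∈ ℝ^{3+3n}`. -/
def av (n : ℕ) (a : Fin (3*n+3) → ℝ) (j : ℕ) : ℝ :=
  if h : j - 1 < 3*n+3 then a ⟨j - 1, h⟩ else 0

/-- `ω1 = Σ_{k=0}^n a_{1+3k}`. -/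
def om1 (n : ℕ) (a : Fin (3*n+3) → ℝ) : ℝ := ∑ k ∈ Finset.range (n+1), av n a (1+3*k)

/-- `ω2 = −a₁ − a₃ + Σ_{k=0}^n a_{2+3k}`. -/
def om2 (n : ℕ) (a : Fin (3*n+3) → ℝ) : ℝ :=
  -(av n a 1) - av n a 3 + ∑ k ∈ Finset.range (n+1), av n a (2+3*k)

/-- `ω3 = Σ_{k=0}^n a_{3+3k}`. -/
def om3 (n : ℕ) (a : Fin (3*n+3) → ℝ) : ℝ := ∑ k ∈ Finset.range (n+1), av n a (3+3*k)

/-- `Ω2(ξ) = Σ_{k=0}^n a_{2+3k} ξ^k`. -/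
def Om2 (n : ℕ) (a : Fin (3*n+3) → ℝ) (ξ : ℝ) : ℝ :=
  ∑ k ∈ Finset.range (n+1), av n a (2+3*k) * ξ ^ k

/-- `Ω4(ξ) = Σ_{k=1}^n a_{1+3k} ξ^{k−1}`. -/
def Om4 (n : ℕ) (a : Fin (3*n+3) → ℝ) (ξ : ℝ) : ℝ :=
  ∑ k ∈ Finset.Icc 1 n, av n a (1+3*k) * ξ ^ (k-1)

/-- `Ω6(ξ) = Σ_{k=1}^n a_{3+3k} ξ^{k−1}`. -/
def Om6 (n : ℕ) (a : Fin (3*n+3) → ℝ) (ξ : ℝ) : ℝ :=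
  ∑ k ∈ Finset.Icc 1 n, av n a (3+3*k) * ξ ^ (k-1)

/-- `Δ(ξ) = (a₁/ω1)ξ − a₃/ω3`. -/
def Dlt (n : ℕ) (a : Fin (3*n+3) → ℝ) (ξ : ℝ) : ℝ :=
  av n a 1 / om1 n a * ξ - av n a 3 / om3 n a

/-- `ξ* = (ω1 a₃)/(a₁ ω3)`. -/
def xistar (n : ℕ) (a : Fin (3*n+3) → ℝ) : ℝ :=
  om1 n a * av n a 3 / (av n a 1 * om3 n a)

/-- `F1(ξ) = Ω6(ξ)/ω3 − Ω4(ξ)/ω1`. -/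
def F1 (n : ℕ) (a : Fin (3*n+3) → ℝ) (ξ : ℝ) : ℝ :=
  Om6 n a ξ / om3 n a - Om4 n a ξ / om1 n a

/-- `F3(ξ) = (a₁ξ/ω1)(Ω6(ξ)/ω3) − (a₃/ω3)(Ω4(ξ)/ω1)`. -/
def F3 (n : ℕ) (a : Fin (3*n+3) → ℝ) (ξ : ℝ) : ℝ :=
  av n a 1 * ξ / om1 n a * (Om6 n a ξ / om3 n a) - av n a 3 / om3 n a * (Om4 n a ξ / om1 n a)

/-- `A(ξ) = (Ω4(ξ)+Ω6(ξ))Ω2(ξ)`. -/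
def Ap (n : ℕ) (a : Fin (3*n+3) → ℝ) (ξ : ℝ) : ℝ := (Om4 n a ξ + Om6 n a ξ) * Om2 n a ξ

/-- `B(ξ) = (a₁ξ + a₃)Ω2(ξ) − ω2 ξ (Ω4(ξ)+Ω6(ξ))`. -/
def Bp (n : ℕ) (a : Fin (3*n+3) → ℝ) (ξ : ℝ) : ℝ :=
  (av n a 1 * ξ + av n a 3) * Om2 n a ξ - om2 n a * ξ * (Om4 n a ξ + Om6 n a ξ)

/-- `C(ξ) = ξ(a₁ξ + a₃)(ω1+ω2+ω3)`. -/
def Cp (n : ℕ) (a : Fin (3*n+3) → ℝ) (ξ : ℝ) : ℝ :=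
  ξ * (av n a 1 * ξ + av n a 3) * (om1 n a + om2 n a + om3 n a)

/-- `P(ξ) = A(ξ)Δ(ξ)² + B(ξ)Δ(ξ)F1(ξ) − C(ξ)F1(ξ)²`. -/
def Pp (n : ℕ) (a : Fin (3*n+3) → ℝ) (ξ : ℝ) : ℝ :=
  Ap n a ξ * (Dlt n a ξ)^2 + Bp n a ξ * Dlt n a ξ * F1 n a ξ - Cp n a ξ * (F1 n a ξ)^2

/-- `θ(ξ) = 2C(ξ)F1(ξ) − Δ(ξ)[B(ξ) + (B(ξ)² + 4A(ξ)C(ξ))^{1/2}]`. -/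
def thetaFun (n : ℕ) (a : Fin (3*n+3) → ℝ) (ξ : ℝ) : ℝ :=
  2 * Cp n a ξ * F1 n a ξ -
    Dlt n a ξ * (Bp n a ξ + Real.sqrt ((Bp n a ξ)^2 + 4 * Ap n a ξ * Cp n a ξ))

/-- `g1(ξ) = ξ^{1−n} F1(ξ)/Δ(ξ)`. -/
def g1f (n : ℕ) (a : Fin (3*n+3) → ℝ) (ξ : ℝ) : ℝ :=
  ξ ^ ((1 : ℤ) - (n : ℤ)) * F1 n a ξ / Dlt n a ξ

/-- `g3(ξ) = ξ^{−1} F3(ξ)/Δ(ξ)`. -/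
def g3f (n : ℕ) (a : Fin (3*n+3) → ℝ) (ξ : ℝ) : ℝ :=
  ξ⁻¹ * F3 n a ξ / Dlt n a ξ

/-- The candidate second steady state `b = diag(g^L) a` built from a zero `ξ`
of the determining equation, with `g = (g1(ξ), ξ, g3(ξ))`. -/
def bOf (n : ℕ) (a : Fin (3*n+3) → ℝ) (ξ : ℝ) : Fin (3*n+3) → ℝ :=
  fun j => gL n ![g1f n a ξ, ξ, g3f n a ξ] j * a j

end

end Phos

theorem exists_mem_uIoo_eq_zero_and_lt_zero {f g : ℝ → ℝ} {x y : ℝ} (hf : Continuous f)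
    (hg : Continuous g) (hfx : f x < 0) (hgx : g x < 0) (hgy : 0 < g y)
    (hfg : ∀ u ∈ Set.uIoo x y, f u = 0 → 0 < g u) :
    ∃ ρ ∈ Set.uIoo x y, g ρ = 0 ∧ f ρ < 0 := by
  -- a zero of `max f g` can only be a zero of `g` at which `f < 0`
  have hmax : ContinuousOn (fun u => max (f u) (g u)) (Set.uIcc x y) :=
    (hf.max hg).continuousOn
  have hx : max (f x) (g x) < 0 := max_lt hfx hgx
  have hy : 0 < max (f y) (g y) := hgy.trans_le (le_max_right _ _)
  obtain ⟨σ, hσ, hσ0⟩ : ∃ σ ∈ Set.uIoo x y, max (f σ) (g σ) = 0 := by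
    rcases le_total x y with hxy | hyx
    · rw [Set.uIoo_of_le hxy]
      exact intermediate_value_Ioo hxy (Set.uIcc_of_le hxy ▸ hmax) ⟨hx, hy⟩
    · rw [Set.uIoo_of_ge hyx]
      exact intermediate_value_Ioo' hyx (Set.uIcc_of_ge hyx ▸ hmax) ⟨hx, hy⟩
  have hfσ : f σ < 0 := by
    refine (max_le_iff.mp hσ0.le).1.lt_of_ne fun hf0 => ?_
    exact (hfg σ hσ hf0).not_ge (max_le_iff.mp hσ0.le).2
  exact ⟨σ, hσ, ((max_eq_iff.mp hσ0).resolve_left fun h => hfσ.ne h.1).1, hfσ⟩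

theorem exists_pos_zero_mul_sub_nonpos {F P : ℝ → ℝ} {s M c : ℝ} (hF : Continuous F)
    (hP : Continuous P) (hs : 0 < s) (hsM : s < M) (hc : 0 < c) (hPs : P s = -(c * F s ^ 2))
    (hPF : ∀ ξ, 0 < ξ → ξ ≠ s → F ξ = 0 → 0 < P ξ) (hP0 : 0 < P 0) (hPM : 0 < P M) :
    ∃ ρ, 0 < ρ ∧ P ρ = 0 ∧ F ρ * (ρ - s) ≤ 0 := by
  rcases lt_trichotomy (F s) 0 with hFs | hFs | hFs
  · have hPs' : P s < 0 := by rw [hPs]; nlinarith [pow_pos (neg_pos.mpr hFs) 2]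
    obtain ⟨ρ, hρ, hPρ, hFρ⟩ := exists_mem_uIoo_eq_zero_and_lt_zero hF hP hFs hPs' hPM
      (fun u hu => by rw [Set.uIoo_of_lt hsM] at hu; exact hPF u (hs.trans hu.1) hu.1.ne')
    rw [Set.uIoo_of_lt hsM] at hρ
    exact ⟨ρ, hs.trans hρ.1, hPρ, by nlinarith [hρ.1]⟩
  · exact ⟨s, hs, by simp [hPs, hFs], by simp⟩
  · have hPs' : P s < 0 := by rw [hPs]; nlinarith [pow_pos hFs 2]
    obtain ⟨ρ, hρ, hPρ, hFρ⟩ := exists_mem_uIoo_eq_zero_and_lt_zero hF.neg hP (neg_lt_zero.mpr hFs)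
      hPs' hP0 (fun u hu h => by
        rw [Set.uIoo_of_gt hs] at hu; exact hPF u hu.1 hu.2.ne (neg_eq_zero.mp h))
    rw [Set.uIoo_of_gt hs] at hρ
    have hFρ' : 0 < F ρ := by simpa using hFρ
    exact ⟨ρ, hρ.1, hPρ, by nlinarith [hρ.2]⟩

namespace Polynomial

theorem exists_isRoot_lt_of_odd_natDegree {p : ℝ[X]} (hodd : Odd p.natDegree)
    (hlc : 0 < p.leadingCoeff) {y : ℝ} (hy : 0 < p.eval y) : ∃ x < y, p.IsRoot x := by
  have hdeg : 0 < (p.comp (-X)).degree := by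
    rw [degree_eq_natDegree (fun h => by simp_all), natDegree_comp]
    simpa using hodd.pos
  have hlc' : (p.comp (-X)).leadingCoeff ≤ 0 := by
    simp [hodd.neg_one_pow, hlc.le]
  obtain ⟨t, ht, hyt⟩ := ((tendsto_atBot_of_leadingCoeff_nonpos _ hdeg hlc').eventually
    (Filter.eventually_lt_atBot 0) |>.and (Filter.eventually_gt_atTop (-y))).exists
  simp only [eval_comp, eval_neg, eval_X] at ht
  obtain ⟨x, hx, hx0⟩ := intermediate_value_Ioo (by linarith) p.continuous.continuousOn
    (Set.mem_Ioo.mpr ⟨ht, hy⟩)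
  exact ⟨x, hx.2, hx0⟩

theorem exists_gt_eval_pos {p : ℝ[X]} (hdeg : 0 < p.degree) (hlc : 0 < p.leadingCoeff)
    (s : ℝ) : ∃ M > s, 0 < p.eval M :=
  (((tendsto_atTop_of_leadingCoeff_nonneg p hdeg hlc.le).eventually_gt_atTop 0).and
    (Filter.eventually_gt_atTop s)).exists.imp fun _ h => ⟨h.2, h.1⟩

theorem ncard_le_natDegree_of_isRoot {R : Type*} [CommRing R] [IsDomain R] {p : R[X]}
    (hp : p ≠ 0) {T : Set R} (hT : ∀ x ∈ T, p.IsRoot x) : T.Finite ∧ T.ncard ≤ p.natDegree := by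
  classical
  have hsub : T ⊆ ↑p.roots.toFinset := fun x hx => by simpa [hp] using hT x hx
  refine ⟨p.roots.toFinset.finite_toSet.subset hsub, ?_⟩
  calc T.ncard ≤ (↑p.roots.toFinset : Set R).ncard := Set.ncard_le_ncard hsub
    _ = p.roots.toFinset.card := Set.ncard_coe_finset _
    _ ≤ Multiset.card p.roots := Multiset.toFinset_card_le _
    _ ≤ p.natDegree := card_roots' p

variable {R : Type*} [Semiring R]

def HasTopCoeff (p : R[X]) (d : ℕ) (c : R) : Prop := p.natDegree ≤ d ∧ p.coeff d = c

namespace HasTopCoeff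

variable {p q : R[X]} {d e : ℕ} {c c' : R}

theorem congr {d' : ℕ} {c'' : R} (h : HasTopCoeff p d c) (hd : d = d') (hc : c = c'') :
    HasTopCoeff p d' c'' := hd ▸ hc ▸ h

theorem of_natDegree_lt (h : p.natDegree < d) : HasTopCoeff p d 0 :=
  ⟨h.le, coeff_eq_zero_of_natDegree_lt h⟩

theorem mono (h : HasTopCoeff p d c) (hde : d < e) : HasTopCoeff p e 0 :=
  of_natDegree_lt (h.1.trans_lt hde)

theorem C (r : R) : HasTopCoeff (C r) 0 r := ⟨by simp, by simp⟩

theorem X : HasTopCoeff (X : R[X]) 1 1 := ⟨natDegree_X_le, coeff_X_one⟩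

theorem add (hp : HasTopCoeff p d c) (hq : HasTopCoeff q d c') :
    HasTopCoeff (p + q) d (c + c') :=
  ⟨natDegree_add_le_of_degree_le hp.1 hq.1, by rw [coeff_add, hp.2, hq.2]⟩

theorem mul (hp : HasTopCoeff p d c) (hq : HasTopCoeff q e c') :
    HasTopCoeff (p * q) (d + e) (c * c') :=
  ⟨natDegree_mul_le_of_le hp.1 hq.1, by
    rw [coeff_mul_add_eq_of_natDegree_le hp.1 hq.1, hp.2, hq.2]⟩

theorem pow (hp : HasTopCoeff p d c) (m : ℕ) : HasTopCoeff (p ^ m) (m * d) (c ^ m) :=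
  ⟨natDegree_pow_le_of_le m hp.1, by rw [coeff_pow_of_natDegree_le hp.1, hp.2]⟩

theorem sum_C_mul_X_pow {ι : Type*} {s : Finset ι} {a : ι → R} {k : ι → ℕ} {i : ι} (hi : i ∈ s)
    (hk : ∀ j ∈ s, j ≠ i → k j < k i) :
    HasTopCoeff (∑ j ∈ s, Polynomial.C (a j) * Polynomial.X ^ k j) (k i) (a i) := by
  classical
  refine ⟨natDegree_sum_le_of_forall_le _ _ fun j hj => (natDegree_C_mul_X_pow_le _ _).trans ?_,
    ?_⟩
  · rcases eq_or_ne j i with rfl | hji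
    exacts [le_rfl, (hk j hj hji).le]
  · rw [finsetSum_coeff, Finset.sum_eq_single i (fun j hj hji => by
      rw [coeff_C_mul_X_pow, if_neg (hk j hj hji).ne']) (fun h => (h hi).elim)]
    simp

theorem natDegree_eq (h : HasTopCoeff p d c) (hc : c ≠ 0) : p.natDegree = d :=
  h.1.antisymm (le_natDegree_of_ne_zero (h.2 ▸ hc))

theorem leadingCoeff_eq (h : HasTopCoeff p d c) (hc : c ≠ 0) : p.leadingCoeff = c := by
  rw [leadingCoeff, h.natDegree_eq hc, h.2]

theorem sub {R : Type*} [Ring R] {p q : R[X]} {d : ℕ} {c c' : R} (hp : HasTopCoeff p d c)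
    (hq : HasTopCoeff q d c') : HasTopCoeff (p - q) d (c - c') :=
  ⟨(natDegree_sub_le_of_le hp.1 hq.1).trans (max_self d).le, by rw [coeff_sub, hp.2, hq.2]⟩

end HasTopCoeff

end Polynomial

namespace Phos

section Positivity

variable {n : ℕ} {a : Fin (3*n+3) → ℝ}

theorem av_pos (ha : ∀ j, 0 < a j) {j : ℕ} (h1 : 1 ≤ j) (h2 : j ≤ 3*n+3) : 0 < av n a j := by
  rw [av, dif_pos (by omega)]
  exact ha _

theorem om1_pos (ha : ∀ j, 0 < a j) : 0 < om1 n a :=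
  sum_pos (fun k hk => av_pos ha (by omega) (by simp at hk; omega)) nonempty_range_add_one

theorem om3_pos (ha : ∀ j, 0 < a j) : 0 < om3 n a :=
  sum_pos (fun k hk => av_pos ha (by omega) (by simp at hk; omega)) nonempty_range_add_one

theorem om1_add_om2_add_om3_pos (ha : ∀ j, 0 < a j) : 0 < om1 n a + om2 n a + om3 n a := by
  have h2 : 0 < ∑ k ∈ range (n+1), av n a (2+3*k) :=
    sum_pos (fun k hk => av_pos ha (by omega) (by simp at hk; omega)) nonempty_range_add_one
  have h1 : av n a 1 ≤ om1 n a :=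
    single_le_sum (f := fun k => av n a (1+3*k))
      (fun k hk => (av_pos ha (by omega) (by simp at hk; omega)).le) (mem_range.mpr n.succ_pos)
  have h3 : av n a 3 ≤ om3 n a :=
    single_le_sum (f := fun k => av n a (3+3*k))
      (fun k hk => (av_pos ha (by omega) (by simp at hk; omega)).le) (mem_range.mpr n.succ_pos)
  rw [om2]
  linarith

theorem Om2_pos (ha : ∀ j, 0 < a j) {ξ : ℝ} (hξ : 0 < ξ) : 0 < Om2 n a ξ :=
  sum_pos (fun k hk => mul_pos (av_pos ha (by omega) (by simp at hk; omega)) (pow_pos hξ k))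
    nonempty_range_add_one

theorem Om4_pos (ha : ∀ j, 0 < a j) (hn : 1 ≤ n) {ξ : ℝ} (hξ : 0 < ξ) : 0 < Om4 n a ξ :=
  sum_pos (fun k hk => mul_pos (av_pos ha (by simp at hk; omega) (by simp at hk; omega))
    (pow_pos hξ _)) ⟨1, mem_Icc.mpr ⟨le_rfl, hn⟩⟩

theorem Om6_pos (ha : ∀ j, 0 < a j) (hn : 1 ≤ n) {ξ : ℝ} (hξ : 0 < ξ) : 0 < Om6 n a ξ :=
  sum_pos (fun k hk => mul_pos (av_pos ha (by simp at hk; omega) (by simp at hk; omega))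
    (pow_pos hξ _)) ⟨1, mem_Icc.mpr ⟨le_rfl, hn⟩⟩

theorem Ap_pos (ha : ∀ j, 0 < a j) (hn : 1 ≤ n) {ξ : ℝ} (hξ : 0 < ξ) : 0 < Ap n a ξ :=
  mul_pos (add_pos (Om4_pos ha hn hξ) (Om6_pos ha hn hξ)) (Om2_pos ha hξ)

theorem Cp_pos (ha : ∀ j, 0 < a j) {ξ : ℝ} (hξ : 0 < ξ) : 0 < Cp n a ξ := by
  have h1 := av_pos ha (j := 1) le_rfl (by omega)
  have h3 := av_pos ha (j := 3) (by omega) (by omega)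
  exact mul_pos (mul_pos hξ (by positivity)) (om1_add_om2_add_om3_pos ha)

theorem xistar_pos (ha : ∀ j, 0 < a j) : 0 < xistar n a := by
  have h1 := av_pos ha (j := 1) le_rfl (by omega)
  have h3 := av_pos ha (j := 3) (by omega) (by omega)
  have := om1_pos ha
  have := om3_pos ha
  unfold xistar
  positivity

theorem Dlt_eq_mul_sub_xistar (ha : ∀ j, 0 < a j) (ξ : ℝ) :
    Dlt n a ξ = av n a 1 / om1 n a * (ξ - xistar n a) := by
  have h1 := (av_pos ha (j := 1) le_rfl (by omega)).ne'
  have := (om1_pos ha).ne'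
  have := (om3_pos ha).ne'
  rw [Dlt, xistar]
  field_simp

theorem Pp_xistar (ha : ∀ j, 0 < a j) :
    Pp n a (xistar n a) = -(Cp n a (xistar n a) * F1 n a (xistar n a) ^ 2) := by
  rw [Pp, Dlt_eq_mul_sub_xistar ha, sub_self]
  ring

theorem Pp_pos_of_F1_eq_zero (ha : ∀ j, 0 < a j) (hn : 1 ≤ n) {ξ : ℝ} (hξ : 0 < ξ)
    (hξs : ξ ≠ xistar n a) (hF : F1 n a ξ = 0) : 0 < Pp n a ξ := by
  have hΔ : Dlt n a ξ ≠ 0 := by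
    rw [Dlt_eq_mul_sub_xistar ha]
    exact mul_ne_zero (div_pos (av_pos ha le_rfl (by omega)) (om1_pos ha)).ne' (sub_ne_zero.mpr hξs)
  rw [Pp, hF]
  simpa using mul_pos (Ap_pos ha hn hξ) (pow_pos (abs_pos.mpr hΔ) 2 |>.trans_eq (sq_abs _))

theorem sum_Icc_mul_zero_pow (hn : 1 ≤ n) (b : ℕ → ℝ) :
    ∑ k ∈ Icc 1 n, b k * (0 : ℝ) ^ (k - 1) = b 1 := by
  rw [sum_eq_single 1 (fun k hk hk1 => by simp at hk; simp [show k - 1 ≠ 0 by omega])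
    (by simp; omega)]
  simp

theorem Pp_zero_pos (ha : ∀ j, 0 < a j) (hn : 1 ≤ n) : 0 < Pp n a 0 := by
  have h2 := av_pos ha (j := 2) (by omega) (by omega)
  have h3 := av_pos ha (j := 3) (by omega) (by omega)
  have h4 := av_pos ha (j := 4) (by omega) (by omega)
  have := om1_pos ha
  have := om3_pos ha
  have hP0 : Pp n a 0 =
      av n a 2 * av n a 3 ^ 2 * av n a 4 * ((om1 n a)⁻¹ + (om3 n a)⁻¹) / om3 n a := by
    simp only [Pp, Ap, Bp, Cp, Dlt, F1, Om2, Om4, Om6, sum_Icc_mul_zero_pow hn]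
    simp [zero_pow_eq]
    ring
  rw [hP0]
  positivity

end Positivity

noncomputable section Polynomials

open Polynomial

variable (n : ℕ) (a : Fin (3*n+3) → ℝ)

def Om2Poly : ℝ[X] := ∑ k ∈ range (n+1), C (av n a (2+3*k)) * X ^ k

def Om4Poly : ℝ[X] := ∑ k ∈ Icc 1 n, C (av n a (1+3*k)) * X ^ (k-1)

def Om6Poly : ℝ[X] := ∑ k ∈ Icc 1 n, C (av n a (3+3*k)) * X ^ (k-1)

def DltPoly : ℝ[X] := C (av n a 1 / om1 n a) * X - C (av n a 3 / om3 n a)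

def F1Poly : ℝ[X] := C (om3 n a)⁻¹ * Om6Poly n a - C (om1 n a)⁻¹ * Om4Poly n a

def PPoly : ℝ[X] :=
  (Om4Poly n a + Om6Poly n a) * Om2Poly n a * DltPoly n a ^ 2
    + ((C (av n a 1) * X + C (av n a 3)) * Om2Poly n a
      - C (om2 n a) * X * (Om4Poly n a + Om6Poly n a)) * DltPoly n a * F1Poly n a
    - X * (C (av n a 1) * X + C (av n a 3)) * C (om1 n a + om2 n a + om3 n a) * F1Poly n a ^ 2

theorem eval_F1Poly (ξ : ℝ) : (F1Poly n a).eval ξ = F1 n a ξ := by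
  simp [F1Poly, F1, Om4Poly, Om6Poly, Om4, Om6, eval_finsetSum, div_eq_inv_mul]

theorem eval_PPoly (ξ : ℝ) : (PPoly n a).eval ξ = Pp n a ξ := by
  simp [PPoly, Pp, Ap, Bp, Cp, Dlt, DltPoly, eval_F1Poly, Om2Poly, Om4Poly, Om6Poly, Om2, Om4,
    Om6, eval_finsetSum]

theorem F1_continuous : Continuous (F1 n a) :=
  (F1Poly n a).continuous.congr (eval_F1Poly n a)

theorem Pp_continuous : Continuous (Pp n a) :=
  (PPoly n a).continuous.congr (eval_PPoly n a)

theorem hasTopCoeff_PPoly (hn : 1 ≤ n) : HasTopCoeff (PPoly n a) (2*n+1)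
    (av n a 1 / om1 n a * av n a 1 * av n a (2+3*n) * av n a (3+3*n) *
      ((om1 n a)⁻¹ + (om3 n a)⁻¹)) := by
  have h2 : HasTopCoeff (Om2Poly n a) n (av n a (2+3*n)) :=
    .sum_C_mul_X_pow (k := fun k => k) (mem_range.mpr (by omega))
      (fun j hj hjn => by simp at hj; omega)
  have h4 : HasTopCoeff (Om4Poly n a) (n-1) (av n a (1+3*n)) :=
    .sum_C_mul_X_pow (k := fun k => k - 1) (mem_Icc.mpr ⟨hn, le_rfl⟩)
      (fun j hj hjn => by simp at hj; omega)
  have h6 : HasTopCoeff (Om6Poly n a) (n-1) (av n a (3+3*n)) :=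
    .sum_C_mul_X_pow (k := fun k => k - 1) (mem_Icc.mpr ⟨hn, le_rfl⟩)
      (fun j hj hjn => by simp at hj; omega)
  have hΔ : HasTopCoeff (DltPoly n a) 1 (av n a 1 / om1 n a) :=
    (((HasTopCoeff.C _).mul .X).sub ((HasTopCoeff.C _).mono zero_lt_one)).congr rfl (by ring)
  have hF : HasTopCoeff (F1Poly n a) (n-1)
      ((om3 n a)⁻¹ * av n a (3+3*n) - (om1 n a)⁻¹ * av n a (1+3*n)) :=
    (((HasTopCoeff.C _).mul h6).sub ((HasTopCoeff.C _).mul h4)).congr (zero_add _) rfl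
  have hlin : HasTopCoeff (C (av n a 1) * X + C (av n a 3)) 1 (av n a 1) :=
    (((HasTopCoeff.C _).mul .X).add ((HasTopCoeff.C _).mono zero_lt_one)).congr rfl (by ring)
  have h46 := h4.add h6
  have hA := (h46.mul h2).mul (hΔ.pow 2)
  have hB := (hlin.mul h2).sub ((((HasTopCoeff.C (om2 n a)).mul .X).mul h46).mono
    (by omega : 0 + 1 + (n-1) < 1 + n))
  have hBΔF := (hB.mul hΔ).mul hF
  have hCF := (((HasTopCoeff.X.mul hlin).mul (HasTopCoeff.C (om1 n a + om2 n a + om3 n a))).mul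
    (hF.pow 2)).mono (by omega : 1 + 1 + 0 + 2 * (n-1) < 2*n+1)
  -- the `Ω4` contributions of `AΔ²` and `BΔF1` cancel in the top coefficient
  exact (((hA.congr (by omega) rfl).add (hBΔF.congr (by omega) rfl)).sub hCF).congr rfl (by ring)

end Polynomials

theorem PPoly_natDegree_leadingCoeff {n : ℕ} {a : Fin (3*n+3) → ℝ} (ha : ∀ j, 0 < a j)
    (hn : 1 ≤ n) : (PPoly n a).natDegree = 2*n+1 ∧ 0 < (PPoly n a).leadingCoeff := by
  have h1 := av_pos ha (j := 1) le_rfl (by omega)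
  have h2 := av_pos ha (j := 2+3*n) (by omega) (by omega)
  have h3 := av_pos ha (j := 3+3*n) (by omega) (by omega)
  have := om1_pos ha
  have := om3_pos ha
  have hc : 0 < av n a 1 / om1 n a * av n a 1 * av n a (2+3*n) * av n a (3+3*n) *
      ((om1 n a)⁻¹ + (om3 n a)⁻¹) := by positivity
  have hP := hasTopCoeff_PPoly n a hn
  exact ⟨hP.natDegree_eq hc.ne', hP.leadingCoeff_eq hc.ne' ▸ hc⟩

theorem exists_pos_root_F1_mul_Dlt_nonpos {n : ℕ} {a : Fin (3*n+3) → ℝ} (ha : ∀ j, 0 < a j)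
    (hn : 1 ≤ n) : ∃ ρ, 0 < ρ ∧ Pp n a ρ = 0 ∧ F1 n a ρ * Dlt n a ρ ≤ 0 := by
  obtain ⟨hdeg, hlc⟩ := PPoly_natDegree_leadingCoeff ha hn
  obtain ⟨M, hM, hPM⟩ := Polynomial.exists_gt_eval_pos
    (Polynomial.natDegree_pos_iff_degree_pos.mp (by omega)) hlc (xistar n a)
  obtain ⟨ρ, hρ, hPρ, hFρ⟩ := exists_pos_zero_mul_sub_nonpos (F1_continuous n a)
    (Pp_continuous n a) (xistar_pos ha) hM (Cp_pos ha (xistar_pos ha)) (Pp_xistar ha)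
    (fun ξ hξ hξs => Pp_pos_of_F1_eq_zero ha hn hξ hξs) (Pp_zero_pos ha hn)
    (by rwa [← eval_PPoly])
  refine ⟨ρ, hρ, hPρ, ?_⟩
  rw [Dlt_eq_mul_sub_xistar ha, mul_left_comm]
  exact mul_nonpos_of_nonneg_of_nonpos
    (div_pos (av_pos ha le_rfl (by omega)) (om1_pos ha)).le hFρ

/-- (At most `2n−1` admissible zeros.) The set of admissible
zeros `{ξ > 0 : ξ ≠ ξ*, P(ξ) = 0, F1(ξ)Δ(ξ) > 0}` has at most `2n−1` elements. -/
theorem at_most_admissible_zeros (n : ℕ) (hn : 2 ≤ n)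
    (a : Fin (3*n+3) → ℝ) (ha : ∀ j, 0 < a j) :
    {ξ : ℝ | 0 < ξ ∧ ξ ≠ xistar n a ∧ Pp n a ξ = 0 ∧
      0 < F1 n a ξ * Dlt n a ξ}.Finite ∧
    {ξ : ℝ | 0 < ξ ∧ ξ ≠ xistar n a ∧ Pp n a ξ = 0 ∧
      0 < F1 n a ξ * Dlt n a ξ}.ncard ≤ 2*n - 1 := by
  set S := {ξ : ℝ | 0 < ξ ∧ ξ ≠ xistar n a ∧ Pp n a ξ = 0 ∧ 0 < F1 n a ξ * Dlt n a ξ}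
  have hn1 : 1 ≤ n := by omega
  obtain ⟨hdeg, hlc⟩ := PPoly_natDegree_leadingCoeff ha hn1
  -- besides the admissible zeros, `P` has a negative root `ν` and a positive root `ρ`
  obtain ⟨ν, hν, hνP⟩ := Polynomial.exists_isRoot_lt_of_odd_natDegree
    (hdeg ▸ odd_two_mul_add_one n) hlc (y := 0) (by rw [eval_PPoly]; exact Pp_zero_pos ha hn1)
  obtain ⟨ρ, hρ, hPρ, hFΔρ⟩ := exists_pos_root_F1_mul_Dlt_nonpos ha hn1
  have hρS : ρ ∉ S := fun h => hFΔρ.not_gt h.2.2.2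
  have hνS : ν ∉ insert ρ S := by
    rintro (rfl | h)
    exacts [(hν.trans hρ).false, (hν.trans h.1).false]
  have hroots : ∀ ξ ∈ insert ν (insert ρ S), (PPoly n a).IsRoot ξ := by
    rintro ξ (rfl | rfl | hξ)
    exacts [hνP, (eval_PPoly n a ξ).trans hPρ, (eval_PPoly n a ξ).trans hξ.2.2.1]
  obtain ⟨hfin, hcard⟩ := Polynomial.ncard_le_natDegree_of_isRoot
    (Polynomial.ne_zero_of_natDegree_gt (n := 0) (by omega)) hroots
  have hSfin := hfin.subset ((Set.subset_insert _ _).trans (Set.subset_insert _ _))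
  rw [Set.ncard_insert_of_notMem hνS (hSfin.insert ρ), Set.ncard_insert_of_notMem hρS hSfin,
    hdeg] at hcard
  exact ⟨hSfin, by omega⟩

end Phos
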